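/- arXiv:2002.11387 — 2 statements merged into one kernel-verified Lean document; each statement's English description precedes it below -/
import Mathlib

section
/- Fix a winner number k with 1 ≤ k ≤ n and a price p > 0 with Σ_{i=n−k+1}^n b_i/p ≥ 1 and b_n > 0. Let C be the unique solution in (0, b_n/p] of Σ_{i=n−k+1}^n min{b_i/p, C} = 1. Then the cap-form allocation assigning a_i = 0 for i ≤ n−k and a_i = min{b_i/p, C} for i > n−k is feasible for price p and winner number k, and it minimizes the flexible Gini index among all feasible allocations for price p and winner number k. -/
open Finset

/-- The ascending rearrangement of a vector. -/
noncomputable def sortedAsc {n : ℕ} (a : Fin n → ℝ) : Fin n → ℝ :=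
  a ∘ Tuple.sort a

/-- The Gini index of an ascending-sorted nonnegative vector `y` on `Fin k`:
`2 (∑ i, i * y_i) / (k ∑ i, y_i) - (k+1)/k` (with 1-based weights). -/
noncomputable def gini {k : ℕ} (y : Fin k → ℝ) : ℝ :=
  2 * (∑ i : Fin k, (((i : ℕ) : ℝ) + 1) * y i) / (k * ∑ i, y i) - ((k : ℝ) + 1) / k

/-- The flexible Gini index with winner number `k`: the Gini index of the top `k`
entries of the ascending rearrangement of the allocation. -/
noncomputable def flexGini {n : ℕ} (k : ℕ) (a : Fin n → ℝ) : ℝ :=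
  if h : k ≤ n then
    gini (fun i : Fin k => sortedAsc a ⟨n - k + i, by have := i.isLt; omega⟩)
  else 0

/-- Feasibility of allocation `a` for budgets `b`, winner number `k`, price `p`. -/
def Feasible {n : ℕ} (b : Fin n → ℝ) (k : ℕ) (p : ℝ) (a : Fin n → ℝ) : Prop :=
  (∀ i, 0 ≤ a i) ∧ (∑ i, a i = 1) ∧ (∀ i, a i * p ≤ b i) ∧
    n - k ≤ (Finset.univ.filter fun i => a i = 0).card

open Classical in
/-- The minimum flexible Gini index over feasible allocations (`1` if none exists). -/
noncomputable def gStar {n : ℕ} (b : Fin n → ℝ) (k : ℕ) (p : ℝ) : ℝ :=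
  if ∃ a, Feasible b k p a then sInf (flexGini k '' {a | Feasible b k p a}) else 1

/-- The maximum price for winner number `k` under Gini cap `g`. -/
noncomputable def pStar {n : ℕ} (b : Fin n → ℝ) (k : ℕ) (g : ℝ) : ℝ :=
  sSup {p : ℝ | 0 < p ∧ gStar b k p ≤ g}

/-- The Gini mechanism's price: the maximum of `pStar` over allowed winner numbers. -/
noncomputable def pStarK {n : ℕ} (b : Fin n → ℝ) (K : Finset ℕ) (g : ℝ) : ℝ :=
  sSup ((fun k => pStar b k g) '' (K : Set ℕ))

/-- The `(m+1)`-st smallest budget (0-based index `m`). -/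
noncomputable def nthSmallest {n : ℕ} (b : Fin n → ℝ) (m : ℕ) : ℝ :=
  if h : m < n then sortedAsc b ⟨m, h⟩ else 0

/-- The allocation cap `C` at price `p` for winner number `k`. -/
noncomputable def capOf {n : ℕ} (b : Fin n → ℝ) (k : ℕ) (p : ℝ) : ℝ :=
  sInf {C : ℝ | 0 < C ∧
    1 ≤ ∑ i ∈ Finset.univ.filter (fun i : Fin n => n - k ≤ (i : ℕ)),
        min (sortedAsc b i / p) C}

/-- The winner number chosen by the Gini mechanism (ties broken in favor of more winners). -/
noncomputable def mechWinnerNum {n : ℕ} (b : Fin n → ℝ) (K : Finset ℕ) (g : ℝ) : ℕ :=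
  sSup {k | k ∈ K ∧ pStar b k g = pStarK b K g}

/-- The allocation of the Gini mechanism: agents in the bottom `n - k` positions (by budget)
receive `0`; the `k` winners receive `min (bᵢ/p, C)` at the mechanism price `p`. -/
noncomputable def mechAlloc {n : ℕ} (b : Fin n → ℝ) (K : Finset ℕ) (g : ℝ) : Fin n → ℝ :=
  fun i =>
    if ((Tuple.sort b).symm i : ℕ) < n - mechWinnerNum b K g then 0
    else min (b i / pStarK b K g) (capOf b (mechWinnerNum b K g) (pStarK b K g))

/-- Agent `i`'s spending under the Gini mechanism. -/
noncomputable def spend {n : ℕ} (b : Fin n → ℝ) (K : Finset ℕ) (g : ℝ) (i : Fin n) : ℝ :=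
  mechAlloc b K g i * pStarK b K g

/-- Agent `i`'s utility under the Gini mechanism when her valuation is `v`. -/
noncomputable def util {n : ℕ} (b : Fin n → ℝ) (K : Finset ℕ) (g : ℝ) (i : Fin n) (v : ℝ) : ℝ :=
  mechAlloc b K g i * (v - pStarK b K g)

/-!
For a fixed nonnegative total, the Gini index increases with
`∑ i, (i + 1) * yᵢ = ∑ m, ∑ i ≥ m, yᵢ`, so it suffices that every suffix sum of the capped vector
`min βᵢ C` is at most that of any ascending `y ≤ β` with the same total. If some `yᵢ` with `i < m`
exceeds its capped value, then `yᵢ > C` bounds every capped entry from `m` on; otherwise the prefix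
sums before `m` are dominated and the totals agree. A feasible allocation, sorted ascending, carries
its whole mass on the top `k` positions (the others are among its zeros), and its `j`-th smallest
entry is at most `b j / p` because `b` is sorted.
-/

section SortedAsc

variable {n : ℕ}

lemma sortedAsc_monotone (a : Fin n → ℝ) : Monotone (sortedAsc a) := Tuple.monotone_sort a

lemma sortedAsc_eq_self {a : Fin n → ℝ} (h : Monotone a) : sortedAsc a = a := by
  rw [sortedAsc, Tuple.sort_eq_refl_iff_monotone.mpr h]
  rfl

lemma sum_sortedAsc (a : Fin n → ℝ) : ∑ i, sortedAsc a i = ∑ i, a i :=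
  Equiv.sum_comp (Tuple.sort a) a

lemma Fin.exists_mem_ge_of_val_lt_card {s : Finset (Fin n)} {i : Fin n} (h : (i : ℕ) < #s) :
    ∃ j ∈ s, i ≤ j := by
  by_contra! hs
  have := card_le_card fun j hj => mem_Iio.mpr (hs j hj)
  rw [Fin.card_Iio] at this
  omega

lemma exists_mem_sortedAsc_le {a : Fin n → ℝ} {s : Finset (Fin n)} {i : Fin n}
    (h : (i : ℕ) < #s) : ∃ j ∈ s, sortedAsc a i ≤ a j := by
  obtain ⟨l, hl, hil⟩ :=
    Fin.exists_mem_ge_of_val_lt_card (s := s.map (Tuple.sort a).symm.toEmbedding) (by simpa)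
  rw [mem_map_equiv, Equiv.symm_symm] at hl
  exact ⟨_, hl, sortedAsc_monotone a hil⟩

lemma sortedAsc_le_of_le {a c : Fin n → ℝ} (hc : Monotone c) (h : ∀ j, a j ≤ c j)
    (i : Fin n) : sortedAsc a i ≤ c i := by
  obtain ⟨j, hj, hij⟩ := exists_mem_sortedAsc_le (a := a) (s := Iic i) (i := i) (by simp)
  exact hij.trans ((h j).trans (hc (mem_Iic.mp hj)))

lemma sortedAsc_eq_zero_of_lt_card {a : Fin n → ℝ} (ha : ∀ j, 0 ≤ a j) {i : Fin n}
    (hi : (i : ℕ) < #{j | a j = 0}) : sortedAsc a i = 0 := by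
  obtain ⟨j, hj, hij⟩ := exists_mem_sortedAsc_le hi
  exact le_antisymm (hij.trans (mem_filter.mp hj).2.le) (ha _)

end SortedAsc

section TopEntries

variable {n k : ℕ}

def topIndex (hkn : k ≤ n) (i : Fin k) : Fin n := ⟨n - k + i, by omega⟩

lemma topIndex_monotone (hkn : k ≤ n) : Monotone (topIndex hkn) := fun i j hij => by
  rw [Fin.le_def] at hij
  exact Fin.mk_le_mk.mpr (by omega)

lemma sum_comp_topIndex {M : Type*} [AddCommMonoid M] (hkn : k ≤ n) (f : Fin n → M) :
    ∑ i, f (topIndex hkn i) = ∑ j ∈ univ.filter (fun j : Fin n => n - k ≤ (j : ℕ)), f j := by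
  refine sum_nbij (topIndex hkn) (fun i _ => ?_) (fun i _ j _ hij => ?_) (fun j hj => ?_)
    fun _ _ => rfl
  · simp [topIndex]
    omega
  · simpa [topIndex, Fin.ext_iff] using hij
  · simp only [coe_filter, mem_univ, true_and, Set.mem_ofPred_eq] at hj
    exact ⟨⟨j - (n - k), by omega⟩, mem_univ _, Fin.ext (by simp [topIndex]; omega)⟩

lemma flexGini_eq_gini_comp_topIndex (hkn : k ≤ n) (a : Fin n → ℝ) :
    flexGini k a = gini (sortedAsc a ∘ topIndex hkn) :=
  dif_pos hkn

end TopEntries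

namespace Feasible

variable {n k : ℕ} {b a : Fin n → ℝ} {p : ℝ}

lemma sum_sortedAsc_comp_topIndex (ha : Feasible b k p a) (hkn : k ≤ n) :
    ∑ i, sortedAsc a (topIndex hkn i) = 1 := by
  obtain ⟨ha0, ha1, -, hzeros⟩ := ha
  rw [sum_comp_topIndex, ← ha1, ← sum_sortedAsc,
    ← sum_filter_add_sum_filter_not univ fun j : Fin n => n - k ≤ (j : ℕ), left_eq_add]
  refine sum_eq_zero fun j hj => sortedAsc_eq_zero_of_lt_card ha0 ?_
  simp only [mem_filter, mem_univ, true_and, not_le] at hj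
  omega

lemma sortedAsc_le_div (ha : Feasible b k p a) (hb : Monotone b) (hp : 0 < p) (j : Fin n) :
    sortedAsc a j ≤ b j / p :=
  sortedAsc_le_of_le (fun _ _ h => div_le_div_of_nonneg_right (hb h) hp.le)
    (fun i => (le_div_iff₀ hp).mpr (ha.2.2.1 i)) j

end Feasible

section CapForm

variable {n k : ℕ} {b : Fin n → ℝ} {p C : ℝ}

noncomputable def capForm (b : Fin n → ℝ) (k : ℕ) (p C : ℝ) : Fin n → ℝ :=
  fun i => if (i : ℕ) < n - k then 0 else min (b i / p) C

lemma capForm_nonneg (hb : ∀ i, 0 ≤ b i) (hp : 0 ≤ p) (hC : 0 ≤ C) (i : Fin n) :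
    0 ≤ capForm b k p C i := by
  unfold capForm
  split_ifs
  exacts [le_rfl, le_min (div_nonneg (hb i) hp) hC]

lemma capForm_monotone (hmono : Monotone b) (hb : ∀ i, 0 ≤ b i) (hp : 0 ≤ p) (hC : 0 ≤ C) :
    Monotone (capForm b k p C) := by
  intro i j hij
  by_cases hi : (i : ℕ) < n - k
  · simpa only [capForm, if_pos hi] using capForm_nonneg hb hp hC j
  · have hj : ¬ (j : ℕ) < n - k := by rw [Fin.le_def] at hij; omega
    simp only [capForm, if_neg hi, if_neg hj]
    exact min_le_min_right C (div_le_div_of_nonneg_right (hmono hij) hp)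

lemma capForm_comp_topIndex (hkn : k ≤ n) :
    capForm b k p C ∘ topIndex hkn = fun i => min (b (topIndex hkn i) / p) C := by
  ext i
  simp [capForm, topIndex]

lemma sum_capForm :
    ∑ i, capForm b k p C i
      = ∑ i ∈ univ.filter (fun i : Fin n => n - k ≤ (i : ℕ)), min (b i / p) C := by
  rw [← sum_filter_add_sum_filter_not univ fun j : Fin n => n - k ≤ (j : ℕ), add_eq_left.mpr]
  · exact sum_congr rfl fun i hi => by simp_all [capForm]
  · exact sum_eq_zero fun i hi => by simp_all [capForm]

lemma capForm_feasible (hb : ∀ i, 0 ≤ b i) (hp : 0 < p) (hC : 0 ≤ C)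
    (hCeq : ∑ i ∈ univ.filter (fun i : Fin n => n - k ≤ (i : ℕ)), min (b i / p) C = 1) :
    Feasible b k p (capForm b k p C) := by
  refine ⟨capForm_nonneg hb hp.le hC, sum_capForm.trans hCeq, fun i => ?_, ?_⟩
  · unfold capForm
    split_ifs
    · simpa using hb i
    · exact (le_div_iff₀ hp).mp (min_le_left _ _)
  · calc n - k = #{i : Fin n | (i : ℕ) < n - k} := by rw [Fin.card_filter_val_lt]; omega
      _ ≤ _ := card_le_card fun i hi => by simp_all [capForm]; omega

end CapForm

section Gini

variable {k : ℕ}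

lemma sum_succ_mul_eq_sum_sum_Ici (w : Fin k → ℝ) :
    ∑ i : Fin k, (((i : ℕ) : ℝ) + 1) * w i = ∑ m : Fin k, ∑ i ∈ Ici m, w i := by
  rw [sum_comm' (t' := univ) (s' := fun i => Iic i) (by simp)]
  simp [Fin.card_Iic]

lemma gini_le_gini_of_sum_Ici_le {y z : Fin k → ℝ} (hsum : ∑ i, z i = ∑ i, y i)
    (hy : 0 ≤ ∑ i, y i) (hsuffix : ∀ m, ∑ i ∈ Ici m, z i ≤ ∑ i ∈ Ici m, y i) :
    gini z ≤ gini y := by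
  unfold gini
  rw [hsum, sum_succ_mul_eq_sum_sum_Ici, sum_succ_mul_eq_sum_sum_Ici]
  gcongr 2 * ?_ / _ - _
  exact sum_le_sum fun m _ => hsuffix m

lemma sum_Ici_min_le {y β : Fin k → ℝ} {C : ℝ} (hy : Monotone y) (hyβ : ∀ i, y i ≤ β i)
    (hsum : ∑ i, min (β i) C = ∑ i, y i) (m : Fin k) :
    ∑ i ∈ Ici m, min (β i) C ≤ ∑ i ∈ Ici m, y i := by
  by_cases h : ∃ i < m, min (β i) C < y i
  · obtain ⟨i, him, hi⟩ := h
    have hCy : C < y i := by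
      by_contra! h'
      exact hi.not_ge (le_min (hyβ i) h')
    exact sum_le_sum fun j hj =>
      (min_le_right _ _).trans (hCy.le.trans (hy (him.le.trans (mem_Ici.mp hj))))
  · push Not at h
    have hprefix : ∑ i ∈ Iio m, y i ≤ ∑ i ∈ Iio m, min (β i) C :=
      sum_le_sum fun i hi => h i (mem_Iio.mp hi)
    have hsplit (f : Fin k → ℝ) : ∑ i, f i = ∑ i ∈ Iio m, f i + ∑ i ∈ Ici m, f i := by
      rw [← sum_filter_add_sum_filter_not univ (· < m)]
      simp [filter_gt_eq_Iio, filter_le_eq_Ici]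
    linarith [hsplit y, hsplit fun i => min (β i) C]

theorem gini_min_le_gini {y β : Fin k → ℝ} {C : ℝ} (hy : Monotone y) (hyβ : ∀ i, y i ≤ β i)
    (hsum : ∑ i, min (β i) C = ∑ i, y i) (hy0 : 0 ≤ ∑ i, y i) :
    gini (fun i => min (β i) C) ≤ gini y :=
  gini_le_gini_of_sum_Ici_le hsum hy0 (sum_Ici_min_le hy hyβ hsum)

end Gini

/-- If `∑_{i=n-k+1}^n bᵢ/p ≥ 1` and `b_n > 0`, and `C ∈ (0, b_n/p]` solves
`∑_{i=n-k+1}^n min (bᵢ/p) C = 1`, then the cap-form allocation (`0` for `i ≤ n-k` and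
`min (bᵢ/p) C` for `i > n-k`) is feasible for price `p` and winner number `k`, and it minimizes
the flexible Gini index among all feasible allocations. -/
theorem capForm_minimizes_gini {n : ℕ} (b : Fin n → ℝ) (hmono : Monotone b)
    (hnn : ∀ i, 0 ≤ b i) (k : ℕ) (hk1 : 1 ≤ k) (hkn : k ≤ n) (p : ℝ) (hp : 0 < p)
    (C : ℝ) (hC : C ∈ Set.Ioc 0 (b ⟨n - 1, by omega⟩ / p))
    (hCeq : ∑ i ∈ Finset.univ.filter (fun i : Fin n => n - k ≤ (i : ℕ)),
        min (b i / p) C = 1) :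
    Feasible b k p (fun i : Fin n => if (i : ℕ) < n - k then 0 else min (b i / p) C) ∧
      ∀ a : Fin n → ℝ, Feasible b k p a →
        flexGini k (fun i : Fin n => if (i : ℕ) < n - k then 0 else min (b i / p) C)
          ≤ flexGini k a := by
  refine ⟨capForm_feasible hnn hp hC.1.le hCeq, fun a ha => ?_⟩
  change flexGini k (capForm b k p C) ≤ flexGini k a
  rw [flexGini_eq_gini_comp_topIndex hkn, flexGini_eq_gini_comp_topIndex hkn,
    sortedAsc_eq_self (capForm_monotone hmono hnn hp.le hC.1.le), capForm_comp_topIndex hkn]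
  have hsum := ha.sum_sortedAsc_comp_topIndex hkn
  refine gini_min_le_gini ((sortedAsc_monotone a).comp (topIndex_monotone hkn))
    (fun i => ha.sortedAsc_le_div hmono hp _) ?_ (hsum.symm ▸ zero_le_one)
  rw [Function.comp_def, hsum, sum_comp_topIndex hkn fun j => min (b j / p) C, hCeq]
end

section
/- Fix a winner number k with 1 ≤ k ≤ n and a Gini cap g ∈ (0,1). The maximum price p*_k(b) is a continuous function of each coordinate b_i of the budget profile (on the domain where it is defined, i.e., where the (n−k+1)-st smallest budget is positive). Consequently, for any finite set K of allowed winner numbers, the Gini mechanism's price p*(b) = max_{k∈K} p*_k(b) is continuous in every coordinate. -/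
open Finset

/-!
Raising a budget only enlarges the feasible set, so `p*_k` is monotone in `b`; scaling all
budgets by `c > 0` scales the feasible prices by `c` and keeps every allocation, so `p*_k` is
homogeneous of degree one. With `b ≥ 0` this squeezes `p*_k` at a coordinate value `y > 0`:
`p*_k(x) ≤ p*_k(y) ≤ (y / x) p*_k(x)` for `0 < x ≤ y`, which gives continuity away from `0`.
At `0` the price is locally constant: let `c` be the `(n-k+1)`-st smallest budget when `bᵢ = 0`.
For `x ≤ c`, a feasible allocation giving agent `i` a positive share leaves some agent among the
`k` largest budgets (all `≥ c ≥ x`) with share zero, by counting; swapping the two shares keeps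
feasibility at `bᵢ = 0` and the Gini index. The mechanism's price is a finite maximum of such
functions.
-/

open Function Filter Topology

lemma neg_div_le_gini {k : ℕ} {y : Fin k → ℝ} (hy : 0 ≤ y) : -(((k : ℝ) + 1) / k) ≤ gini y := by
  have hweighted : 0 ≤ 2 * (∑ i : Fin k, (((i : ℕ) : ℝ) + 1) * y i) / (k * ∑ i, y i) := by
    refine div_nonneg (mul_nonneg zero_le_two (sum_nonneg fun i _ => ?_))
      (mul_nonneg k.cast_nonneg (sum_nonneg fun i _ => hy i))
    exact mul_nonneg (by positivity) (hy i)
  rw [gini]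
  linarith

lemma neg_div_le_flexGini {n k : ℕ} {a : Fin n → ℝ} (ha : 0 ≤ a) :
    -(((k : ℝ) + 1) / k) ≤ flexGini k a := by
  rw [flexGini]
  split
  · exact neg_div_le_gini fun _ => ha _
  · rw [neg_nonpos]
    positivity

lemma flexGini_comp_perm {n k : ℕ} (a : Fin n → ℝ) (σ : Equiv.Perm (Fin n)) :
    flexGini k (a ∘ σ) = flexGini k a := by
  have hsorted : sortedAsc (a ∘ σ) = sortedAsc a := Tuple.comp_perm_comp_sort_eq_comp_sort
  simp only [flexGini, hsorted]

section Feasible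

variable {n k : ℕ} {b b' : Fin n → ℝ} {p : ℝ} {a : Fin n → ℝ}

lemma Feasible.mono (ha : Feasible b k p a) (hb : b ≤ b') : Feasible b' k p a :=
  ⟨ha.1, ha.2.1, fun j => (ha.2.2.1 j).trans (hb j), ha.2.2.2⟩

lemma Feasible.comp_perm (ha : Feasible b k p a) (σ : Equiv.Perm (Fin n))
    (hbudget : ∀ j, a (σ j) * p ≤ b' j) : Feasible b' k p (a ∘ σ) := by
  obtain ⟨hnonneg, hsum, -, hzeros⟩ := ha
  refine ⟨fun j => hnonneg _, (Equiv.sum_comp σ a).trans hsum, hbudget, hzeros.trans_eq ?_⟩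
  exact card_equiv σ.symm fun j => by simp

lemma Feasible.le_sum (ha : Feasible b k p a) : p ≤ ∑ j, b j :=
  calc p = ∑ j, a j * p := by rw [← sum_mul, ha.2.1, one_mul]
    _ ≤ ∑ j, b j := sum_le_sum fun j _ => ha.2.2.1 j

lemma feasible_smul_iff {c : ℝ} (hc : 0 < c) :
    Feasible (c • b) k (c * p) a ↔ Feasible b k p a := by
  have hbudget : ∀ j, a j * (c * p) ≤ (c • b) j ↔ a j * p ≤ b j := fun j => by
    rw [Pi.smul_apply, smul_eq_mul, mul_left_comm, mul_le_mul_iff_right₀ hc]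
  simp only [Feasible, hbudget]

end Feasible

section GStar

variable {n k : ℕ} {b b' : Fin n → ℝ} {p p' g : ℝ}

lemma bddBelow_flexGini_image_feasible : BddBelow (flexGini k '' {a | Feasible b k p a}) :=
  ⟨_, Set.forall_mem_image.2 fun _ ha => neg_div_le_flexGini ha.1⟩

lemma gStar_eq_sInf (h : ∃ a, Feasible b k p a) :
    gStar b k p = sInf (flexGini k '' {a | Feasible b k p a}) := by
  rw [gStar, if_pos h]

lemma exists_feasible_of_gStar_lt_one (h : gStar b k p < 1) : ∃ a, Feasible b k p a := by
  by_contra hnone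
  rw [gStar, if_neg hnone] at h
  exact lt_irrefl _ h

lemma gStar_anti_of_feasible (hb : b ≤ b') (h : ∃ a, Feasible b k p a) :
    gStar b' k p ≤ gStar b k p := by
  obtain ⟨a, ha⟩ := h
  rw [gStar_eq_sInf ⟨a, ha⟩, gStar_eq_sInf ⟨a, ha.mono hb⟩]
  exact csInf_le_csInf bddBelow_flexGini_image_feasible ⟨_, a, ha, rfl⟩
    (Set.image_mono fun _ ha => ha.mono hb)

lemma gStar_congr
    (h : flexGini k '' {a | Feasible b k p a} = flexGini k '' {a | Feasible b' k p' a}) :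
    gStar b k p = gStar b' k p' := by
  have hex : (∃ a, Feasible b k p a) ↔ ∃ a, Feasible b' k p' a := by
    have := congrArg Set.Nonempty h
    rwa [Set.image_nonempty, Set.image_nonempty, eq_iff_iff] at this
  rw [gStar, gStar, h]
  classical exact if_congr hex rfl rfl

lemma gStar_smul {c : ℝ} (hc : 0 < c) (p : ℝ) : gStar (c • b) k (c * p) = gStar b k p :=
  gStar_congr (by simp only [feasible_smul_iff hc])

lemma bddAbove_setOf_gStar_le (hg : g < 1) : BddAbove {p | 0 < p ∧ gStar b k p ≤ g} := by
  refine ⟨∑ j, b j, fun p hp => ?_⟩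
  obtain ⟨a, ha⟩ := exists_feasible_of_gStar_lt_one (hp.2.trans_lt hg)
  exact ha.le_sum

lemma pStar_nonneg : 0 ≤ pStar b k g := Real.sSup_nonneg fun _ hp => hp.1.le

lemma pStar_mono (hg : g < 1) (hb : b ≤ b') : pStar b k g ≤ pStar b' k g := by
  refine Real.sSup_le (fun p hp => le_csSup (bddAbove_setOf_gStar_le hg) ⟨hp.1, ?_⟩) pStar_nonneg
  exact (gStar_anti_of_feasible hb (exists_feasible_of_gStar_lt_one (hp.2.trans_lt hg))).trans hp.2

lemma pStar_smul {c : ℝ} (hc : 0 < c) : pStar (c • b) k g = c * pStar b k g := by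
  rw [pStar, pStar, ← smul_eq_mul, ← Real.sSup_smul_of_nonneg hc.le]
  congr 1
  ext p
  have hgStar : gStar (c • b) k p = gStar b k (c⁻¹ * p) := by
    have := gStar_smul (b := b) (k := k) hc (c⁻¹ * p)
    rwa [mul_inv_cancel_left₀ hc.ne'] at this
  rw [Set.mem_smul_set_iff_inv_smul_mem₀ hc.ne', smul_eq_mul]
  simp only [Set.mem_ofPred_eq, hgStar, mul_pos_iff_of_pos_left (inv_pos.2 hc)]

end GStar

section NthSmallest

variable {n : ℕ} {b : Fin n → ℝ} {m : ℕ}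

lemma lt_of_nthSmallest_ne_zero (h : nthSmallest b m ≠ 0) : m < n := by
  by_contra hm
  exact h (dif_neg hm)

lemma nthSmallest_eq_sort (hm : m < n) : nthSmallest b m = b (Tuple.sort b ⟨m, hm⟩) :=
  dif_pos hm

lemma sub_le_card_nthSmallest_le (hm : m < n) : n - m ≤ #{j | nthSmallest b m ≤ b j} := by
  calc n - m = #((Ici (⟨m, hm⟩ : Fin n)).map (Tuple.sort b).toEmbedding) := by
        rw [card_map, Fin.card_Ici]
    _ ≤ #{j | nthSmallest b m ≤ b j} := by
        refine card_le_card fun j hj => ?_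
        obtain ⟨l, hl, rfl⟩ := mem_map.1 hj
        rw [mem_filter, nthSmallest_eq_sort hm]
        exact ⟨mem_univ _, Tuple.monotone_sort b (mem_Ici.1 hl)⟩

lemma exists_eq_zero_nthSmallest_le {a : Fin n → ℝ} (hm : m < n) {i : Fin n}
    (hbi : b i < nthSmallest b m) (hai : a i ≠ 0) (hzeros : m ≤ #{j | a j = 0}) :
    ∃ j, a j = 0 ∧ nthSmallest b m ≤ b j := by
  have hsub : ∀ P : Fin n → Prop, [DecidablePred P] → ¬ P i → univ.filter P ⊆ univ.erase i :=
    fun P _ hPi j hj => mem_erase.2 ⟨by rintro rfl; exact hPi (by simpa using hj), mem_univ j⟩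
  have hcard : #(univ.erase i) < #{j | a j = 0} + #{j | nthSmallest b m ≤ b j} := by
    have := sub_le_card_nthSmallest_le (b := b) hm
    rw [card_erase_of_mem (mem_univ i), card_univ, Fintype.card_fin]
    omega
  obtain ⟨j, hj⟩ := inter_nonempty_of_card_lt_card_add_card (hsub (a · = 0) hai)
    (hsub (nthSmallest b m ≤ b ·) hbi.not_ge) hcard
  rw [mem_inter, mem_filter, mem_filter] at hj
  exact ⟨j, hj.1.2, hj.2.2⟩

end NthSmallest

section UpdateBudget

variable {n k : ℕ} {b : Fin n → ℝ} {i : Fin n} {g : ℝ}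

lemma exists_feasible_update_zero {x p : ℝ} {a : Fin n → ℝ}
    (hxc : x ≤ nthSmallest (update b i 0) (n - k)) (ha : Feasible (update b i x) k p a) :
    ∃ a', Feasible (update b i 0) k p a' ∧ flexGini k a' = flexGini k a := by
  have hbudget_off : ∀ l, l ≠ i → a l * p ≤ update b i 0 l := fun l hl => by
    simpa [hl] using ha.2.2.1 l
  by_cases hspend : a i * p ≤ 0
  · refine ⟨a, ⟨ha.1, ha.2.1, fun l => ?_, ha.2.2.2⟩, rfl⟩
    rcases eq_or_ne l i with rfl | hl
    · simpa using hspend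
    · exact hbudget_off l hl
  have hax : a i * p ≤ x := by simpa using ha.2.2.1 i
  have hpos : 0 < nthSmallest (update b i 0) (n - k) := by linarith
  have hai : a i ≠ 0 := by rintro h; simp [h] at hspend
  obtain ⟨j, haj, hj⟩ := exists_eq_zero_nthSmallest_le (b := update b i 0)
    (lt_of_nthSmallest_ne_zero hpos.ne') (by simpa using hpos) hai ha.2.2.2
  refine ⟨a ∘ Equiv.swap i j, ha.comp_perm _ fun l => ?_, flexGini_comp_perm a _⟩
  rcases eq_or_ne l i with rfl | hli
  · simp [haj]
  rcases eq_or_ne l j with rfl | hlj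
  · rw [Equiv.swap_apply_right]
    linarith
  · rw [Equiv.swap_apply_of_ne_of_ne hli hlj]
    exact hbudget_off l hli

lemma pStar_update_eq_of_le_nthSmallest {x : ℝ} (hx : 0 ≤ x)
    (hxc : x ≤ nthSmallest (update b i 0) (n - k)) :
    pStar (update b i x) k g = pStar (update b i 0) k g := by
  have hle : update b i 0 ≤ update b i x := update_le_update_iff'.2 hx
  have hgStar : ∀ p, gStar (update b i x) k p = gStar (update b i 0) k p := fun p => by
    refine gStar_congr (subset_antisymm ?_ (Set.image_mono fun _ ha => ha.mono hle))
    rintro _ ⟨a, ha, rfl⟩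
    exact exists_feasible_update_zero hxc ha
  simp only [pStar, hgStar]

lemma pStar_update_mul_le (hg : g < 1) (hb : 0 ≤ b) {c : ℝ} (hc : 1 ≤ c) (x : ℝ) :
    pStar (update b i (c * x)) k g ≤ c * pStar (update b i x) k g := by
  rw [← pStar_smul (by linarith), ← update_smul]
  exact pStar_mono hg (update_le_update_iff.2 ⟨le_rfl, fun j _ => le_mul_of_one_le_left (hb j) hc⟩)

end UpdateBudget

lemma continuousAt_of_monotone_of_mul_le {φ : ℝ → ℝ} (hmono : Monotone φ)
    (hsubhom : ∀ c ≥ 1, ∀ x > 0, φ (c * x) ≤ c * φ x) {x₀ : ℝ} (hx₀ : 0 < x₀) :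
    ContinuousAt φ x₀ := by
  have hbounds : ∀ x > 0,
      min (φ x₀) (x / x₀ * φ x₀) ≤ φ x ∧ φ x ≤ max (φ x₀) (x / x₀ * φ x₀) := by
    intro x hx
    rcases le_total x x₀ with hle | hge
    · have hscale := hsubhom (x₀ / x) ((one_le_div hx).2 hle) x hx
      rw [div_mul_cancel₀ _ hx.ne'] at hscale
      have hlower : x / x₀ * φ x₀ ≤ φ x :=
        calc x / x₀ * φ x₀ ≤ x / x₀ * (x₀ / x * φ x) := by gcongr
          _ = φ x := by field_simp
      exact ⟨min_le_of_right_le hlower, le_max_of_le_left (hmono hle)⟩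
    · have hscale := hsubhom (x / x₀) ((one_le_div hx₀).2 hge) x₀ hx₀
      rw [div_mul_cancel₀ _ hx₀.ne'] at hscale
      exact ⟨min_le_of_left_le (hmono hge), le_max_of_le_right hscale⟩
  have hline : Tendsto (fun x => x / x₀ * φ x₀) (𝓝 x₀) (𝓝 (φ x₀)) := by
    simpa [div_self hx₀.ne'] using ((continuous_id.div_const x₀).mul_const (φ x₀)).tendsto x₀
  have hnear := eventually_gt_nhds hx₀
  exact tendsto_of_tendsto_of_tendsto_of_le_of_le'
    (by simpa using (tendsto_const_nhds (x := φ x₀)).min hline)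
    (by simpa using (tendsto_const_nhds (x := φ x₀)).max hline)
    (hnear.mono fun x hx => (hbounds x hx).1) (hnear.mono fun x hx => (hbounds x hx).2)

lemma continuousWithinAt_pStar_update {n k : ℕ} {b : Fin n → ℝ} {i : Fin n} {g : ℝ}
    (hg : g < 1) (hb : 0 ≤ b) {x₀ : ℝ} (hx₀ : 0 ≤ x₀)
    (hpos : 0 < nthSmallest (update b i x₀) (n - k)) :
    ContinuousWithinAt (fun x => pStar (update b i x) k g) (Set.Ici 0) x₀ := by
  rcases hx₀.eq_or_lt with rfl | hx₀
  · refine continuousWithinAt_const.congr_of_eventuallyEq ?_ rfl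
    filter_upwards [Ico_mem_nhdsGE hpos] with x hx
    exact pStar_update_eq_of_le_nthSmallest hx.1 hx.2.le
  · refine (continuousAt_of_monotone_of_mul_le (fun x y hxy => ?_)
      (fun c hc x _ => pStar_update_mul_le hg hb hc x) hx₀).continuousWithinAt
    exact pStar_mono hg (update_le_update_iff'.2 hxy)

/-- The maximum price `p*_k(b)` is continuous in each coordinate `bᵢ` on the
domain where it is defined (where the `(n-k+1)`-st smallest budget is positive); consequently
the Gini mechanism's price `p*(b) = max_{k ∈ K} p*_k(b)` is continuous in every coordinate. -/
theorem pStar_continuous {n : ℕ} (g : ℝ) (hg : g ∈ Set.Ioo (0 : ℝ) 1)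
    (b : Fin n → ℝ) (hnn : ∀ j, 0 ≤ b j) (i : Fin n) :
    (∀ k : ℕ, 1 ≤ k → k ≤ n →
      ContinuousOn (fun x : ℝ => pStar (Function.update b i x) k g)
        {x : ℝ | 0 ≤ x ∧ 0 < nthSmallest (Function.update b i x) (n - k)}) ∧
      ∀ K : Finset ℕ, K.Nonempty → (∀ k ∈ K, 1 ≤ k ∧ k ≤ n) →
        ContinuousOn (fun x : ℝ => pStarK (Function.update b i x) K g)
          {x : ℝ | 0 ≤ x ∧ ∀ k ∈ K, 0 < nthSmallest (Function.update b i x) (n - k)} := by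
  refine ⟨fun k _ _ x hx => ?_, fun K hK _ => ?_⟩
  · exact (continuousWithinAt_pStar_update hg.2 hnn hx.1 hx.2).mono fun _ hy => hy.1
  · have hsup : (fun x => pStarK (update b i x) K g) =
        fun x => K.sup' hK fun k => pStar (update b i x) k g :=
      funext fun x => (sup'_eq_csSup_image K hK _).symm
    rw [hsup]
    exact ContinuousOn.finset_sup'_apply hK fun k hk x hx =>
      (continuousWithinAt_pStar_update hg.2 hnn hx.1 (hx.2 k hk)).mono fun _ hy => hy.1
end
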